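/- arXiv:1811.03663 — 17 statements merged into one kernel-verified Lean document; each statement's English description precedes it below -/
import Mathlib

section
/- For all integers a, b, c, d, e: (T_{a-c}T_{c-b}T_{b-a} + T_{b-c}T_{c-a}T_{a-b}) W_{d+e} = (T_{b-c}T_{c-a}T_{e-b} - T_{b-c}T_{c-b}T_{e-a} + T_{c-b}T_{b-a}T_{e-c}) W_{d+a} + (T_{a-c}T_{c-b}T_{e-a} - T_{a-c}T_{c-a}T_{e-b} + T_{c-a}T_{a-b}T_{e-c}) W_{d+b} + (T_{b-c}T_{a-b}T_{e-a} - T_{a-b}T_{b-a}T_{e-c} + T_{a-c}T_{b-a}T_{e-b}) W_{d+c}. -/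
theorem trib_add (T V : ℤ → ℤ) (hT : ∀ r : ℤ, T r = T (r-1) + T (r-2) + T (r-3))
    (hT0 : T 0 = 0) (hT1 : T 1 = 1) (hT2 : T 2 = 1)
    (hV : ∀ r : ℤ, V r = V (r-1) + V (r-2) + V (r-3)) (x : ℤ) :
    ∀ y : ℤ, V (x+y) = T y * V (x+1) + (T (y-1) + T (y-2)) * V x + T (y-1) * V (x-1) := by
  have hTm1 : T (-1) = 0 := by have h := hT 2; norm_num at h; rw [hT2, hT1, hT0] at h; linarith
  have hTm2 : T (-2) = 1 := by have h := hT 1; norm_num at h; rw [hT1, hT0, hTm1] at h; linarith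
  have hTm3 : T (-3) = -1 := by have h := hT 0; norm_num at h; rw [hT0, hTm1, hTm2] at h; linarith
  have hTm4 : T (-4) = 0 := by
    have h := hT (-1); norm_num at h; rw [hTm1, hTm2, hTm3] at h; linarith
  suffices H : ∀ y : ℤ,
      (V (x+y) = T y * V (x+1) + (T (y-1) + T (y-2)) * V x + T (y-1) * V (x-1)) ∧
      (V (x+(y-1)) = T (y-1) * V (x+1) + (T (y-2) + T (y-3)) * V x + T (y-2) * V (x-1)) ∧
      (V (x+(y-2)) = T (y-2) * V (x+1) + (T (y-3) + T (y-4)) * V x + T (y-3) * V (x-1)) by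
    intro y; exact (H y).1
  intro y
  induction y using Int.induction_on with
  | zero =>
    refine ⟨?_, ?_, ?_⟩
    · norm_num [hT0, hTm1, hTm2]
    · norm_num [hTm1, hTm2, hTm3]
      ring_nf
    · norm_num [hTm2, hTm3, hTm4]
      linear_combination (norm := ring_nf) (- hV (x+1))
  | succ k ih =>
    obtain ⟨i1, i2, i3⟩ := ih
    refine ⟨?_, ?_, ?_⟩
    · linear_combination (norm := ring_nf) hV (x+k+1) + i1 + i2 + i3 - V (x+1) * hT (k+1)
        - V x * (hT (k-1) + hT k) - V (x-1) * hT k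
    · linear_combination (norm := ring_nf) i1
    · linear_combination (norm := ring_nf) i2
  | pred k ih =>
    obtain ⟨i1, i2, i3⟩ := ih
    refine ⟨?_, ?_, ?_⟩
    · linear_combination (norm := ring_nf) i2
    · linear_combination (norm := ring_nf) i3
    · linear_combination (norm := ring_nf) (- hV (x-k)) + i1 - i2 - i3 + V (x+1) * hT (-k)
        + V x * (hT (-k-1) + hT (-k-2)) + V (x-1) * hT (-k-1)

theorem stmt_0 (W T : ℤ → ℤ)
    (hW : ∀ r : ℤ, W r = W (r-1) + W (r-2) + W (r-3))
    (hT : ∀ r : ℤ, T r = T (r-1) + T (r-2) + T (r-3))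
    (hT0 : T 0 = 0) (hT1 : T 1 = 1) (hT2 : T 2 = 1)
    (a b c d e : ℤ) :
    (T (a-c) * T (c-b) * T (b-a) + T (b-c) * T (c-a) * T (a-b)) * W (d+e) =
      (T (b-c) * T (c-a) * T (e-b) - T (b-c) * T (c-b) * T (e-a)
        + T (c-b) * T (b-a) * T (e-c)) * W (d+a)
      + (T (a-c) * T (c-b) * T (e-a) - T (a-c) * T (c-a) * T (e-b)
        + T (c-a) * T (a-b) * T (e-c)) * W (d+b)
      + (T (b-c) * T (a-b) * T (e-a) - T (a-b) * T (b-a) * T (e-c)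
        + T (a-c) * T (b-a) * T (e-b)) * W (d+c) := by
  have addW := trib_add T W hT hT0 hT1 hT2 hW
  have addT := trib_add T T hT hT0 hT1 hT2 hT
  have hWde : W (d+e) = T (e-a) * W (d+a+1) + (T (e-a-1) + T (e-a-2)) * W (d+a)
      + T (e-a-1) * W (d+a-1) := by
    have h := addW (d+a) (e-a); rw [show d+a+(e-a) = d+e by ring] at h; exact h
  have hWdb : W (d+b) = T (b-a) * W (d+a+1) + (T (b-a-1) + T (b-a-2)) * W (d+a)
      + T (b-a-1) * W (d+a-1) := by
    have h := addW (d+a) (b-a); rw [show d+a+(b-a) = d+b by ring] at h; exact h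
  have hWdc : W (d+c) = T (c-a) * W (d+a+1) + (T (c-a-1) + T (c-a-2)) * W (d+a)
      + T (c-a-1) * W (d+a-1) := by
    have h := addW (d+a) (c-a); rw [show d+a+(c-a) = d+c by ring] at h; exact h
  have hTeb : T (e-b) = T (e-a) * T (a-b+1) + (T (e-a-1) + T (e-a-2)) * T (a-b)
      + T (e-a-1) * T (a-b-1) := by
    have h := addT (a-b) (e-a); rw [show a-b+(e-a) = e-b by ring] at h; exact h
  have hTec : T (e-c) = T (e-a) * T (a-c+1) + (T (e-a-1) + T (e-a-2)) * T (a-c)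
      + T (e-a-1) * T (a-c-1) := by
    have h := addT (a-c) (e-a); rw [show a-c+(e-a) = e-c by ring] at h; exact h
  have hTbc : T (b-c) = T (b-a) * T (a-c+1) + (T (b-a-1) + T (b-a-2)) * T (a-c)
      + T (b-a-1) * T (a-c-1) := by
    have h := addT (a-c) (b-a); rw [show a-c+(b-a) = b-c by ring] at h; exact h
  have hTcb : T (c-b) = T (c-a) * T (a-b+1) + (T (c-a-1) + T (c-a-2)) * T (a-b)
      + T (c-a-1) * T (a-b-1) := by
    have h := addT (a-b) (c-a); rw [show a-b+(c-a) = c-b by ring] at h; exact h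
  have hbb : T (b-a) * T (a-b+1) + (T (b-a-1) + T (b-a-2)) * T (a-b)
      + T (b-a-1) * T (a-b-1) = 0 := by
    have h := addT (a-b) (b-a); rw [show a-b+(b-a) = (0:ℤ) by ring, hT0] at h; linarith
  have hcc : T (c-a) * T (a-c+1) + (T (c-a-1) + T (c-a-2)) * T (a-c)
      + T (c-a-1) * T (a-c-1) = 0 := by
    have h := addT (a-c) (c-a); rw [show a-c+(c-a) = (0:ℤ) by ring, hT0] at h; linarith
  rw [hWde, hWdb, hWdc, hTeb, hTec, hTbc, hTcb]
  linear_combination (norm := ring_nf) (-(-((T (e-a) * W (d+a+1) + (T (e-a-1) + T (e-a-2)) * W (d+a) + T (e-a-1) * W (d+a-1)) * T (a-c) * T (c-a)) + T (e-a) * T (a-c) * (T (c-a) * W (d+a+1) + (T (c-a-1) + T (c-a-2)) * W (d+a) + T (c-a-1) * W (d+a-1)) + (T (e-a) * T (a-c+1) + (T (e-a-1) + T (e-a-2)) * T (a-c) + T (e-a-1) * T (a-c-1)) * W (d+a) * T (c-a)) - (T (c-a) * T (a-c+1) + (T (c-a-1) + T (c-a-2)) * T (a-c) + T (c-a-1)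 * T (a-c-1)) * (-(T (e-a) * W (d+a)))) * hbb + (-(-((T (e-a) * W (d+a+1) + (T (e-a-1) + T (e-a-2)) * W (d+a) + T (e-a-1) * W (d+a-1)) * T (a-b) * T (b-a)) + T (e-a) * T (a-b) * (T (b-a) * W (d+a+1) + (T (b-a-1) + T (b-a-2)) * W (d+a) + T (b-a-1) * W (d+a-1)) + (T (e-a) * T (a-b+1) + (T (e-a-1) + T (e-a-2)) * T (a-b) + T (e-a-1) * T (a-b-1)) * W (d+a) * T (b-a))) * hcc
end

section
/- For all integers r and s: 4 W_{r+s} = 2 T_{s-1} W_{r-4} + (T_{s+4} - 7 T_s) W_r + 4 T_s W_{r+1}. -/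
def triAux (W T : ℤ → ℤ) (r t : ℤ) : Prop :=
  4 * W (r+t) = 2 * T (t-1) * W (r-4) + (T (t+4) - 7 * T t) * W r
      + 4 * T t * W (r+1)

theorem stmt_1 (W T : ℤ → ℤ)
    (hW : ∀ r : ℤ, W r = W (r-1) + W (r-2) + W (r-3))
    (hT : ∀ r : ℤ, T r = T (r-1) + T (r-2) + T (r-3))
    (hT0 : T 0 = 0) (hT1 : T 1 = 1) (hT2 : T 2 = 1)
    (r s : ℤ) :
    4 * W (r+s) = 2 * T (s-1) * W (r-4) + (T (s+4) - 7 * T s) * W r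
      + 4 * T s * W (r+1) := by
  have instW : ∀ a b c d : ℤ, a - 1 = b → a - 2 = c → a - 3 = d →
      W a = W b + W c + W d := by
    intro a b c d h1 h2 h3; rw [← h1, ← h2, ← h3]; exact hW a
  have instT : ∀ a b c d : ℤ, a - 1 = b → a - 2 = c → a - 3 = d →
      T a = T b + T c + T d := by
    intro a b c d h1 h2 h3; rw [← h1, ← h2, ← h3]; exact hT a
  have tm1 : T (-1) = 0 := by
    have := instT 2 1 0 (-1) (by ring) (by ring) (by ring); linarith
  have tm2 : T (-2) = 1 := by
    have := instT 1 0 (-1) (-2) (by ring) (by ring) (by ring); linarith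
  have t3 : T 3 = 2 := by
    have := instT 3 2 1 0 (by ring) (by ring) (by ring); linarith
  have t4 : T 4 = 4 := by
    have := instT 4 3 2 1 (by ring) (by ring) (by ring); linarith
  have t5 : T 5 = 7 := by
    have := instT 5 4 3 2 (by ring) (by ring) (by ring); linarith
  have t6 : T 6 = 13 := by
    have := instT 6 5 4 3 (by ring) (by ring) (by ring); linarith
  have step : ∀ t : ℤ, triAux W T r t → triAux W T r (t+1) → triAux W T r (t+2) →
      triAux W T r (t+3) := by
    intro t h1 h2 h3
    unfold triAux at h1 h2 h3 ⊢
    rw [show t+1-1 = t by ring, show t+1+4 = t+5 by ring, show r+(t+1) = r+t+1 by ring] at h2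
    rw [show t+2-1 = t+1 by ring, show t+2+4 = t+6 by ring, show r+(t+2) = r+t+2 by ring] at h3
    rw [show t+3-1 = t+2 by ring, show t+3+4 = t+7 by ring, show r+(t+3) = r+t+3 by ring]
    have hw := instW (r+t+3) (r+t+2) (r+t+1) (r+t) (by ring) (by ring) (by ring)
    have a := instT (t+2) (t+1) t (t-1) (by ring) (by ring) (by ring)
    have b := instT (t+7) (t+6) (t+5) (t+4) (by ring) (by ring) (by ring)
    have c := instT (t+3) (t+2) (t+1) t (by ring) (by ring) (by ring)
    linear_combination h1 + h2 + h3 + 4*hw - 2*W (r-4)*a - W r*b + 7*W r*c - 4*W (r+1)*c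
  have back : ∀ t : ℤ, triAux W T r t → triAux W T r (t+1) → triAux W T r (t+2) →
      triAux W T r (t-1) := by
    intro t h1 h2 h3
    unfold triAux at h1 h2 h3 ⊢
    rw [show t+1-1 = t by ring, show t+1+4 = t+5 by ring, show r+(t+1) = r+t+1 by ring] at h2
    rw [show t+2-1 = t+1 by ring, show t+2+4 = t+6 by ring, show r+(t+2) = r+t+2 by ring] at h3
    rw [show t-1-1 = t-2 by ring, show t-1+4 = t+3 by ring, show r+(t-1) = r+t-1 by ring]
    have hw := instW (r+t+2) (r+t+1) (r+t) (r+t-1) (by ring) (by ring) (by ring)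
    have a := instT (t+1) t (t-1) (t-2) (by ring) (by ring) (by ring)
    have b := instT (t+6) (t+5) (t+4) (t+3) (by ring) (by ring) (by ring)
    have c := instT (t+2) (t+1) t (t-1) (by ring) (by ring) (by ring)
    linear_combination h3 - h2 - h1 - 4*hw + 2*W (r-4)*a + W r*b - 7*W r*c + 4*W (r+1)*c
  suffices h : ∀ t : ℤ, triAux W T r t ∧ triAux W T r (t+1) ∧ triAux W T r (t+2) by
    exact (h s).1
  intro t
  induction t using Int.induction_on with
  | zero =>
    refine ⟨?_, ?_, ?_⟩ <;> unfold triAux <;> norm_num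
    · rw [tm1, hT0, t4]; ring
    · rw [hT0, hT1, t5]; ring
    · rw [hT1, hT2, t6]
      have a1 := instW (r+2) (r+1) r (r-1) (by ring) (by ring) (by ring)
      have a2 := instW (r+1) r (r-1) (r-2) (by ring) (by ring) (by ring)
      have a3 := instW r (r-1) (r-2) (r-3) (by ring) (by ring) (by ring)
      have a4 := instW (r-1) (r-2) (r-3) (r-4) (by ring) (by ring) (by ring)
      linarith
  | succ n ih =>
    obtain ⟨p1, p2, p3⟩ := ih
    refine ⟨p2, ?_, ?_⟩
    · rw [show (n:ℤ)+1+1 = (n:ℤ)+2 by ring]; exact p3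
    · rw [show (n:ℤ)+1+2 = (n:ℤ)+3 by ring]; exact step n p1 p2 p3
  | pred n ih =>
    obtain ⟨p1, p2, p3⟩ := ih
    refine ⟨back _ p1 p2 p3, ?_, ?_⟩
    · rw [show -(n:ℤ)-1+1 = -(n:ℤ) by ring]; exact p1
    · rw [show -(n:ℤ)-1+2 = -(n:ℤ)+1 by ring]; exact p2
end

section
/- For all integers r and s: 4 W_{r+s} = 2 T_{s-4} W_{r-1} + (4 T_{s+1} - 7 T_s) W_r + T_s W_{r+4}. -/
private lemma trib_shift (W : ℤ → ℤ)
    (hW : ∀ r : ℤ, W r = W (r-1) + W (r-2) + W (r-3)) (x : ℤ) :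
    W (x+3) = W (x+2) + W (x+1) + W x := by
  have h := hW (x+3)
  rw [show x+3-1 = x+2 by ring, show x+3-2 = x+1 by ring,
      show x+3-3 = x by ring] at h
  exact h

theorem stmt_2 (W T : ℤ → ℤ)
    (hW : ∀ r : ℤ, W r = W (r-1) + W (r-2) + W (r-3))
    (hT : ∀ r : ℤ, T r = T (r-1) + T (r-2) + T (r-3))
    (hT0 : T 0 = 0) (hT1 : T 1 = 1) (hT2 : T 2 = 1)
    (r s : ℤ) :
    4 * W (r+s) = 2 * T (s-4) * W (r-1) + (4 * T (s+1) - 7 * T s) * W r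
      + T s * W (r+4) := by
  set P : ℤ → Prop := fun s => ∀ r : ℤ,
    4 * W (r+s) = 2 * T (s-4) * W (r-1) + (4 * T (s+1) - 7 * T s) * W r
      + T s * W (r+4) with hP
  have hPe : ∀ a b : ℤ, a = b → P a → P b := fun a b h pa => h ▸ pa
  -- small T values
  have tm1 : T (-1) = 0 := by
    have h := trib_shift T hT (-1)
    norm_num at h; rw [hT0, hT1, hT2] at h; linarith
  have tm2 : T (-2) = 1 := by
    have h := trib_shift T hT (-2)
    norm_num at h; rw [hT0, hT1, tm1] at h; linarith
  have tm3 : T (-3) = -1 := by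
    have h := trib_shift T hT (-3)
    norm_num at h; rw [hT0, tm1, tm2] at h; linarith
  have tm4 : T (-4) = 0 := by
    have h := trib_shift T hT (-4)
    norm_num at h; rw [tm1, tm2, tm3] at h; linarith
  have t3 : T 3 = 2 := by
    have h := trib_shift T hT 0
    norm_num at h; rw [hT0, hT1, hT2] at h; linarith
  -- W expansion: W (r+4) in terms of W (r+1), W r, W (r-1)
  have wexp : ∀ r : ℤ, W (r+4) = 4 * W (r+1) + 3 * W r + 2 * W (r-1) := by
    intro r
    have h1 := trib_shift W hW (r+1)
    have h2 := trib_shift W hW r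
    have h3 := trib_shift W hW (r-1)
    rw [show r+1+3 = r+4 by ring, show r+1+2 = r+3 by ring,
        show r+1+1 = r+2 by ring] at h1
    rw [show r-1+3 = r+2 by ring, show r-1+2 = r+1 by ring,
        show r-1+1 = r by ring] at h3
    linarith
  have p0 : P 0 := by
    intro r
    simp only [show (0:ℤ)-4 = -4 by ring, show (0:ℤ)+1 = 1 by ring, tm4, hT0, hT1]
    ring_nf
  have p1 : P 1 := by
    intro r
    simp only [show (1:ℤ)-4 = -3 by ring, show (1:ℤ)+1 = 2 by ring, tm3, hT1, hT2, wexp r]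
    ring_nf
  have p2 : P 2 := by
    intro r
    have hw2 := trib_shift W hW (r-1)
    rw [show r-1+3 = r+2 by ring, show r-1+2 = r+1 by ring,
        show r-1+1 = r by ring] at hw2
    simp only [show (2:ℤ)-4 = -2 by ring, show (2:ℤ)+1 = 3 by ring, tm2, hT2, t3,
      wexp r, hw2]
    ring_nf
  -- forward step
  have fwd : ∀ s : ℤ, P s → P (s+1) → P (s+2) → P (s+3) := by
    intro s h0 h1 h2 r
    have e0 := h0 r
    have e1 := h1 r
    have e2 := h2 r
    have ww := trib_shift W hW (r+s)
    have tt1 := trib_shift T hT (s-4)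
    have tt2 := trib_shift T hT (s+1)
    have tt3 := trib_shift T hT s
    rw [show r+s+3 = r+(s+3) by ring, show r+s+2 = r+(s+2) by ring,
        show r+s+1 = r+(s+1) by ring] at ww
    rw [show s-4+3 = s+3-4 by ring, show s-4+2 = s+2-4 by ring,
        show s-4+1 = s+1-4 by ring] at tt1
    rw [show s+1+3 = s+3+1 by ring, show s+1+2 = s+2+1 by ring] at tt2
    linear_combination e0 + e1 + e2 + 4*ww - 2*(W (r-1))*tt1
      - 4*(W r)*tt2 + 7*(W r)*tt3 - (W (r+4))*tt3
  -- backward step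
  have bwd : ∀ s : ℤ, P s → P (s+1) → P (s+2) → P (s-1) := by
    intro s h0 h1 h2 r
    have e0 := h0 r
    have e1 := h1 r
    have e2 := h2 r
    have ww := trib_shift W hW (r+(s-1))
    have tt1 := trib_shift T hT (s-1-4)
    have tt2 := trib_shift T hT (s-1+1)
    have tt3 := trib_shift T hT (s-1)
    rw [show r+(s-1)+3 = r+(s+2) by ring, show r+(s-1)+2 = r+(s+1) by ring,
        show r+(s-1)+1 = r+s by ring, show r+(s-1) = r+(s-1) by ring] at ww
    rw [show s-1-4+3 = s+2-4 by ring, show s-1-4+2 = s+1-4 by ring,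
        show s-1-4+1 = s-4 by ring] at tt1
    rw [show s-1+1+3 = s+2+1 by ring, show s-1+1+2 = s+1+1 by ring,
        show s-1+1+1 = s+1 by ring] at tt2
    rw [show s-1+3 = s+2 by ring, show s-1+2 = s+1 by ring,
        show s-1+1 = s by ring] at tt3
    linear_combination e2 - e1 - e0 - 4*ww + 2*(W (r-1))*tt1
      + 4*(W r)*tt2 - 7*(W r)*tt3 + (W (r+4))*tt3
  have key : ∀ s : ℤ, P s ∧ P (s+1) ∧ P (s+2) := by
    intro s
    induction s using Int.induction_on with
    | zero => exact ⟨p0, p1, p2⟩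
    | succ k ih =>
      obtain ⟨a, b, c⟩ := ih
      exact ⟨b, hPe _ _ (by ring) c, hPe _ _ (by ring) (fwd _ a b c)⟩
    | pred k ih =>
      obtain ⟨a, b, c⟩ := ih
      exact ⟨bwd _ a b c, hPe _ _ (by ring) a, hPe _ _ (by ring) b⟩
  exact (key s).1 r
end

section
/- For all integers r and s: W_{r+s} = T_{s-1} W_{r-1} + (T_{s+1} - T_s) W_r + T_s W_{r+1}. -/
lemma trib_zero (F : ℤ → ℤ)
    (hF : ∀ n : ℤ, F n = F (n-1) + F (n-2) + F (n-3))
    (h0 : F 0 = 0) (h1 : F 1 = 0) (h2 : F 2 = 0) : ∀ n : ℤ, F n = 0 := by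
  have key : ∀ n : ℤ, F n = 0 ∧ F (n+1) = 0 ∧ F (n+2) = 0 := by
    intro n
    induction n using Int.induction_on with
    | zero => exact ⟨h0, by simpa using h1, by simpa using h2⟩
    | succ k ih =>
      obtain ⟨a, b, c⟩ := ih
      refine ⟨by simpa using b, by simpa [add_assoc] using c, ?_⟩
      have := hF ((k:ℤ)+3)
      have e1 : (k:ℤ)+3-1 = (k:ℤ)+2 := by ring
      have e2 : (k:ℤ)+3-2 = (k:ℤ)+1 := by ring
      have e3 : (k:ℤ)+3-3 = (k:ℤ) := by ring
      rw [e1, e2, e3] at this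
      have e4 : (k:ℤ)+1+2 = (k:ℤ)+3 := by ring
      rw [e4, this, a, b, c]; ring
    | pred k ih =>
      obtain ⟨a, b, c⟩ := ih
      refine ⟨?_, by simpa [sub_add_cancel] using a, ?_⟩
      · have := hF (-(k:ℤ)+2)
        have e1 : -(k:ℤ)+2-1 = -(k:ℤ)+1 := by ring
        have e2 : -(k:ℤ)+2-2 = -(k:ℤ) := by ring
        have e3 : -(k:ℤ)+2-3 = -(k:ℤ)-1 := by ring
        rw [e1, e2, e3, a, b, c] at this
        linarith
      · have e : -(k:ℤ)-1+2 = -(k:ℤ)+1 := by ring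
        rw [e]; exact b
  exact fun n => (key n).1

theorem stmt_3 (W T : ℤ → ℤ)
    (hW : ∀ r : ℤ, W r = W (r-1) + W (r-2) + W (r-3))
    (hT : ∀ r : ℤ, T r = T (r-1) + T (r-2) + T (r-3))
    (hT0 : T 0 = 0) (hT1 : T 1 = 1) (hT2 : T 2 = 1)
    (r s : ℤ) :
    W (r+s) = T (s-1) * W (r-1) + (T (s+1) - T s) * W r + T s * W (r+1) := by
  -- auxiliary values of T
  have hTm1 : T (-1) = 0 := by
    have := hT 2; norm_num [hT0, hT1, hT2] at this
    linarith
  have hT3 : T 3 = 2 := by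
    have := hT 3
    have e1 : (3:ℤ)-1 = 2 := by norm_num
    have e2 : (3:ℤ)-2 = 1 := by norm_num
    have e3 : (3:ℤ)-3 = 0 := by norm_num
    rw [e1, e2, e3, hT0, hT1, hT2] at this; linarith
  set F : ℤ → ℤ := fun s =>
    W (r+s) - (T (s-1) * W (r-1) + (T (s+1) - T s) * W r + T s * W (r+1)) with hFdef
  have hF : ∀ n : ℤ, F n = F (n-1) + F (n-2) + F (n-3) := by
    intro n
    have hw := hW (r+n)
    have e1 : r+n-1 = r+(n-1) := by ring
    have e2 : r+n-2 = r+(n-2) := by ring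
    have e3 : r+n-3 = r+(n-3) := by ring
    rw [e1, e2, e3] at hw
    have ht1 := hT (n-1)
    have ht2 := hT (n+1)
    have ht3 := hT n
    simp only [hFdef]
    have f1 : n-1-1 = n-2 := by ring
    have f2 : n-1-2 = n-3 := by ring
    have f3 : n-1-3 = n-1-3 := rfl
    have g1 : n-1+1 = n := by ring
    have g2 : n-2+1 = n-1 := by ring
    have g3 : n-3+1 = n-2 := by ring
    have g4 : n-2-1 = n-3 := by ring
    have g5 : n-3-1 = n-1-3 := by ring
    have g6 : n+1-1 = n := by ring
    have g7 : n+1-2 = n-1 := by ring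
    have g8 : n+1-3 = n-2 := by ring
    rw [f1, f2] at ht1
    rw [g6, g7, g8] at ht2
    simp only [g1, g2, g3, f1, f2, g4, g5]
    linear_combination hw - W (r-1) * ht1 - W r * ht2 + W r * ht3 - W (r+1) * ht3
  have h0 : F 0 = 0 := by
    simp only [hFdef]
    norm_num [hT0, hT1, hTm1]
  have h1 : F 1 = 0 := by
    simp only [hFdef]
    norm_num [hT0, hT1, hT2]
  have h2 : F 2 = 0 := by
    simp only [hFdef]
    have := hW (r+2)
    have e1 : r+2-1 = r+1 := by ring
    have e2 : r+2-2 = r := by ring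
    have e3 : r+2-3 = r-1 := by ring
    rw [e1, e2, e3] at this
    norm_num [hT1, hT2, hT3, this]
    ring
  have := trib_zero F hF h0 h1 h2 s
  simp only [hFdef] at this
  linarith
end

section
/- For all integers r and s: 4 W_{r+s} = T_{s-4} W_{r-4} + (T_{s+4} - 11 T_s) W_r + T_s W_{r+4}. -/
private lemma trib_zero_s4 (D : ℤ → ℤ)
    (hD : ∀ s : ℤ, D s = D (s-1) + D (s-2) + D (s-3))
    (h0 : D 0 = 0) (h1 : D 1 = 0) (h2 : D 2 = 0) : ∀ s : ℤ, D s = 0 := by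
  have hDn : ∀ a b c d : ℤ, b = a - 1 → c = a - 2 → d = a - 3 →
      D a = D b + D c + D d := by
    rintro a b c d rfl rfl rfl; exact hD a
  have fwd : ∀ n : ℕ, D n = 0 ∧ D (n+1) = 0 ∧ D (n+2) = 0 := by
    intro n
    induction n with
    | zero => exact ⟨by simpa using h0, by simpa using h1, by simpa using h2⟩
    | succ k ih =>
      obtain ⟨a, b, c⟩ := ih
      have h := hDn ((k:ℤ)+1+2) ((k:ℤ)+2) ((k:ℤ)+1) (k:ℤ) (by ring) (by ring) (by ring)
      refine ⟨by push_cast; linarith,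
        by push_cast; rw [show ((k:ℤ)+1+1) = (k:ℤ)+2 by ring]; linarith,
        by push_cast; linarith⟩
  have bwd : ∀ n : ℕ, D (-(n:ℤ)) = 0 ∧ D (-(n:ℤ)+1) = 0 ∧ D (-(n:ℤ)+2) = 0 := by
    intro n
    induction n with
    | zero => exact ⟨by simpa using h0, by simpa using h1, by simpa using h2⟩
    | succ k ih =>
      obtain ⟨a, b, c⟩ := ih
      have h := hDn (-(k:ℤ)+2) (-(k:ℤ)+1) (-(k:ℤ)) (-((k:ℤ)+1)) (by ring) (by ring) (by ring)
      refine ⟨by push_cast; linarith,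
        by push_cast; rw [show (-((k:ℤ)+1)+1) = -(k:ℤ) by ring]; linarith,
        by push_cast; rw [show (-((k:ℤ)+1)+2) = -(k:ℤ)+1 by ring]; linarith⟩
  intro s
  rcases le_or_gt 0 s with hs | hs
  · obtain ⟨n, rfl⟩ := Int.eq_ofNat_of_zero_le hs
    exact (fwd n).1
  · obtain ⟨n, rfl⟩ : ∃ n : ℕ, s = -(n:ℤ) := ⟨s.natAbs, by omega⟩
    exact (bwd n).1

theorem stmt_4 (W T : ℤ → ℤ)
    (hW : ∀ r : ℤ, W r = W (r-1) + W (r-2) + W (r-3))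
    (hT : ∀ r : ℤ, T r = T (r-1) + T (r-2) + T (r-3))
    (hT0 : T 0 = 0) (hT1 : T 1 = 1) (hT2 : T 2 = 1)
    (r s : ℤ) :
    4 * W (r+s) = T (s-4) * W (r-4) + (T (s+4) - 11 * T s) * W r
      + T s * W (r+4) := by
  have hWn : ∀ a b c d : ℤ, b = a - 1 → c = a - 2 → d = a - 3 →
      W a = W b + W c + W d := by rintro a b c d rfl rfl rfl; exact hW a
  have hTn : ∀ a b c d : ℤ, b = a - 1 → c = a - 2 → d = a - 3 →
      T a = T b + T c + T d := by rintro a b c d rfl rfl rfl; exact hT a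
  -- T values
  have t3 : T 3 = 2 := by have h := hTn 3 2 1 0 (by norm_num) (by norm_num) (by norm_num); omega
  have t4 : T 4 = 4 := by have h := hTn 4 3 2 1 (by norm_num) (by norm_num) (by norm_num); omega
  have t5 : T 5 = 7 := by have h := hTn 5 4 3 2 (by norm_num) (by norm_num) (by norm_num); omega
  have t6 : T 6 = 13 := by have h := hTn 6 5 4 3 (by norm_num) (by norm_num) (by norm_num); omega
  have tm1 : T (-1) = 0 := by have h := hTn 2 1 0 (-1) (by norm_num) (by norm_num) (by norm_num); omega
  have tm2 : T (-2) = 1 := by have h := hTn 1 0 (-1) (-2) (by norm_num) (by norm_num) (by norm_num); omega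
  have tm3 : T (-3) = -1 := by have h := hTn 0 (-1) (-2) (-3) (by norm_num) (by norm_num) (by norm_num); omega
  have tm4 : T (-4) = 0 := by have h := hTn (-1) (-2) (-3) (-4) (by norm_num) (by norm_num) (by norm_num); omega
  set D : ℤ → ℤ := fun s => 4 * W (r+s) - (T (s-4) * W (r-4)
      + (T (s+4) - 11 * T s) * W r + T s * W (r+4)) with hDdef
  have key : ∀ s : ℤ, D s = 0 := by
    apply trib_zero_s4
    · intro x
      simp only [hDdef]
      have h1 := hWn (r+x) (r+(x-1)) (r+(x-2)) (r+(x-3)) (by ring) (by ring) (by ring)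
      have h2 := hTn (x-4) (x-1-4) (x-2-4) (x-3-4) (by ring) (by ring) (by ring)
      have h3 := hTn (x+4) (x-1+4) (x-2+4) (x-3+4) (by ring) (by ring) (by ring)
      have h4 := hTn x (x-1) (x-2) (x-3) rfl rfl rfl
      linear_combination 4 * h1 - W (r-4) * h2 - W r * h3
        + 11 * W r * h4 - W (r+4) * h4
    · simp only [hDdef]
      norm_num [tm4, t4, hT0]
    · simp only [hDdef]
      have h1 := hWn (r+4) (r+3) (r+2) (r+1) (by ring) (by ring) (by ring)
      have h2 := hWn (r+3) (r+2) (r+1) r (by ring) (by ring) (by ring)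
      have h3 := hWn (r+2) (r+1) r (r-1) (by ring) (by ring) (by ring)
      have h4 := hWn (r+1) r (r-1) (r-2) (by ring) (by ring) (by ring)
      have h5 := hWn r (r-1) (r-2) (r-3) rfl rfl rfl
      have h6 := hWn (r-1) (r-2) (r-3) (r-4) (by ring) (by ring) (by ring)
      norm_num [tm3, t5, hT1]
      linarith
    · simp only [hDdef]
      have h1 := hWn (r+4) (r+3) (r+2) (r+1) (by ring) (by ring) (by ring)
      have h2 := hWn (r+3) (r+2) (r+1) r (by ring) (by ring) (by ring)
      have h3 := hWn (r+2) (r+1) r (r-1) (by ring) (by ring) (by ring)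
      have h4 := hWn (r+1) r (r-1) (r-2) (by ring) (by ring) (by ring)
      have h5 := hWn r (r-1) (r-2) (r-3) rfl rfl rfl
      have h6 := hWn (r-1) (r-2) (r-3) (r-4) (by ring) (by ring) (by ring)
      norm_num [tm2, t6, hT2]
      linarith
  have := key s
  simp only [hDdef] at this
  linarith
end

section
/- For all integers r and s: W_{r+s} = (T_{s+1} - 2 T_s - T_{s-2}) W_{r-1} + (T_{s+1} - 2 T_s) W_r + T_s W_{r+2}. -/
private def QQ (W T : ℤ → ℤ) (r s : ℤ) : Prop :=
  W (r+s) = (T (s+1) - 2 * T s - T (s-2)) * W (r-1)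
      + (T (s+1) - 2 * T s) * W r + T s * W (r+2)

private lemma qq_all (W T : ℤ → ℤ)
    (hW : ∀ r : ℤ, W r = W (r-1) + W (r-2) + W (r-3))
    (hT : ∀ r : ℤ, T r = T (r-1) + T (r-2) + T (r-3))
    (hT0 : T 0 = 0) (hT1 : T 1 = 1) (hT2 : T 2 = 1)
    (r : ℤ) : ∀ s : ℤ, QQ W T r s := by
  have hTm1 : T (-1) = 0 := by have h2 := hT 2; norm_num at h2; linarith
  have hTm2 : T (-2) = 1 := by have h1 := hT 1; norm_num at h1; linarith
  have hT3 : T 3 = 2 := by have h3 := hT 3; norm_num at h3; linarith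
  have q0 : QQ W T r 0 := by
    simp only [QQ]; norm_num [hT0, hT1, hTm2]
  have q1 : QQ W T r 1 := by
    simp only [QQ]
    have e := hW (r+2)
    have e1 : r + 2 - 1 = r + 1 := by ring
    have e2 : r + 2 - 2 = r := by ring
    have e3 : r + 2 - 3 = r - 1 := by ring
    rw [e1, e2, e3] at e
    norm_num [hT1, hT2, hTm1]
    linarith
  have q2 : QQ W T r 2 := by
    simp only [QQ]; norm_num [hT2, hT3, hT0]
  -- recurrences helpers
  have tW : ∀ s : ℤ, W (r + (s+3)) = W (r+(s+2)) + W (r+(s+1)) + W (r+s) := by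
    intro s
    have e := hW (r+s+3)
    have e1 : r + s + 3 - 1 = r + (s+2) := by ring
    have e2 : r + s + 3 - 2 = r + (s+1) := by ring
    have e3 : r + s + 3 - 3 = r + s := by ring
    have e0 : r + s + 3 = r + (s+3) := by ring
    rw [e1, e2, e3, e0] at e
    exact e
  have tT : ∀ s : ℤ, T (s+3) = T (s+2) + T (s+1) + T s := by
    intro s
    have e := hT (s+3)
    have e1 : s + 3 - 1 = s + 2 := by ring
    have e2 : s + 3 - 2 = s + 1 := by ring
    have e3 : s + 3 - 3 = s := by ring
    rw [e1, e2, e3] at e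
    exact e
  have key_up : ∀ s : ℤ, QQ W T r s → QQ W T r (s+1) → QQ W T r (s+2) → QQ W T r (s+3) := by
    intro s hs hs1 hs2
    simp only [QQ] at *
    have e1 := tW s
    have t4 : T (s+4) = T (s+3) + T (s+2) + T (s+1) := by
      have := tT (s+1); rw [show s+1+3 = s+4 by ring, show s+1+2 = s+3 by ring, show s+1+1 = s+2 by ring] at this; exact this
    have t3 := tT s
    have t1 : T (s+1) = T s + T (s-1) + T (s-2) := by
      have := tT (s-2); rw [show s-2+3 = s+1 by ring, show s-2+2 = s by ring, show s-2+1 = s-1 by ring] at this; exact this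
    rw [show s+3+1 = s+4 by ring, show s+3-2 = s+1 by ring] at *
    rw [show s+1+1 = s+2 by ring, show s+1-2 = s-1 by ring] at hs1
    rw [show s+2+1 = s+3 by ring, show s+2-2 = s by ring] at hs2
    linear_combination e1 + hs + hs1 + hs2 - W (r-1) * t4 + 2 * W (r-1) * t3 + W (r-1) * t1
      - W r * t4 + 2 * W r * t3 - W (r+2) * t3
  have key_down : ∀ s : ℤ, QQ W T r (s+1) → QQ W T r (s+2) → QQ W T r (s+3) → QQ W T r s := by
    intro s hs1 hs2 hs3
    simp only [QQ] at *
    have e1 := tW s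
    have t4 : T (s+4) = T (s+3) + T (s+2) + T (s+1) := by
      have := tT (s+1); rw [show s+1+3 = s+4 by ring, show s+1+2 = s+3 by ring, show s+1+1 = s+2 by ring] at this; exact this
    have t3 := tT s
    have t1 : T (s+1) = T s + T (s-1) + T (s-2) := by
      have := tT (s-2); rw [show s-2+3 = s+1 by ring, show s-2+2 = s by ring, show s-2+1 = s-1 by ring] at this; exact this
    rw [show s+3+1 = s+4 by ring, show s+3-2 = s+1 by ring] at hs3
    rw [show s+1+1 = s+2 by ring, show s+1-2 = s-1 by ring] at hs1
    rw [show s+2+1 = s+3 by ring, show s+2-2 = s by ring] at hs2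
    linear_combination hs3 - hs1 - hs2 - e1 + W (r-1) * t4 - 2 * W (r-1) * t3 - W (r-1) * t1
      + W r * t4 - 2 * W r * t3 + W (r+2) * t3
  have main : ∀ s : ℤ, QQ W T r s ∧ QQ W T r (s+1) ∧ QQ W T r (s+2) := by
    intro s
    induction s using Int.induction_on with
    | zero => exact ⟨q0, q1, q2⟩
    | succ n ih =>
      obtain ⟨h0, h1, h2⟩ := ih
      refine ⟨h1, h2, ?_⟩
      have := key_up n h0 h1 h2
      rwa [show (n:ℤ)+3 = (n+1)+2 by ring] at this
    | pred n ih =>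
      obtain ⟨h0, h1, h2⟩ := ih
      have qc : ∀ a b : ℤ, a = b → QQ W T r a → QQ W T r b := fun a b h => h ▸ id
      refine ⟨?_, qc _ _ (by ring) h0, qc _ _ (by ring) h1⟩
      exact qc _ _ (by ring) <| key_down (-(n+1))
        (qc _ _ (by ring) h0) (qc _ _ (by ring) h1) (qc _ _ (by ring) h2)
  exact fun s => (main s).1

theorem stmt_5 (W T : ℤ → ℤ)
    (hW : ∀ r : ℤ, W r = W (r-1) + W (r-2) + W (r-3))
    (hT : ∀ r : ℤ, T r = T (r-1) + T (r-2) + T (r-3))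
    (hT0 : T 0 = 0) (hT1 : T 1 = 1) (hT2 : T 2 = 1)
    (r s : ℤ) :
    W (r+s) = (T (s+1) - 2 * T s - T (s-2)) * W (r-1)
      + (T (s+1) - 2 * T s) * W r + T s * W (r+2) := by
  exact qq_all W T hW hT hT0 hT1 hT2 r s
end

section
/- For every integer r: W_{r-16} = -103 W_r + 56 W_{r+1}. -/
theorem stmt_6 (W : ℤ → ℤ)
    (hW : ∀ r : ℤ, W r = W (r-1) + W (r-2) + W (r-3))
    (r : ℤ) :
    W (r-16) = -103 * W r + 56 * W (r+1) := by
  have h : ∀ i : ℤ, W (r - i) = W (r - (i+1)) + W (r - (i+2)) + W (r - (i+3)) := by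
    intro i
    have := hW (r - i)
    convert this using 3 <;> ring
  have h1 := hW (r + 1)
  have e1 : r + 1 - 1 = r - 0 := by ring
  have e2 : r + 1 - 2 = r - 1 := by ring
  have e3 : r + 1 - 3 = r - 2 := by ring
  rw [e1, e2, e3] at h1
  have h0 := h 0
  have h2 := h 1
  have h3 := h 2
  have h4 := h 3
  have h5 := h 4
  have h6 := h 5
  have h7 := h 6
  have h8 := h 7
  have h9 := h 8
  have h10 := h 9
  have h11 := h 10
  have h12 := h 11
  have h13 := h 12
  have h14 := h 13
  norm_num at *
  linarith
end

section
/- For every integer r: 2 W_{r-17} = 9 W_r - 103 W_{r-4}. -/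
theorem stmt_7 (W : ℤ → ℤ)
    (hW : ∀ r : ℤ, W r = W (r-1) + W (r-2) + W (r-3))
    (r : ℤ) :
    2 * W (r-17) = 9 * W r - 103 * W (r-4) := by
  have e0 : W (r-0) = W (r-1) + W (r-2) + W (r-3) := by
    have := hW (r-0); simp only [sub_sub] at this; norm_num at this ⊢; exact this
  have e1 : W (r-1) = W (r-2) + W (r-3) + W (r-4) := by
    have := hW (r-1); simp only [sub_sub] at this; norm_num at this ⊢; exact this
  have e2 : W (r-2) = W (r-3) + W (r-4) + W (r-5) := by
    have := hW (r-2); simp only [sub_sub] at this; norm_num at this ⊢; exact this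
  have e3 : W (r-3) = W (r-4) + W (r-5) + W (r-6) := by
    have := hW (r-3); simp only [sub_sub] at this; norm_num at this ⊢; exact this
  have e4 : W (r-4) = W (r-5) + W (r-6) + W (r-7) := by
    have := hW (r-4); simp only [sub_sub] at this; norm_num at this ⊢; exact this
  have e5 : W (r-5) = W (r-6) + W (r-7) + W (r-8) := by
    have := hW (r-5); simp only [sub_sub] at this; norm_num at this ⊢; exact this
  have e6 : W (r-6) = W (r-7) + W (r-8) + W (r-9) := by
    have := hW (r-6); simp only [sub_sub] at this; norm_num at this ⊢; exact this
  have e7 : W (r-7) = W (r-8) + W (r-9) + W (r-10) := by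
    have := hW (r-7); simp only [sub_sub] at this; norm_num at this ⊢; exact this
  have e8 : W (r-8) = W (r-9) + W (r-10) + W (r-11) := by
    have := hW (r-8); simp only [sub_sub] at this; norm_num at this ⊢; exact this
  have e9 : W (r-9) = W (r-10) + W (r-11) + W (r-12) := by
    have := hW (r-9); simp only [sub_sub] at this; norm_num at this ⊢; exact this
  have e10 : W (r-10) = W (r-11) + W (r-12) + W (r-13) := by
    have := hW (r-10); simp only [sub_sub] at this; norm_num at this ⊢; exact this
  have e11 : W (r-11) = W (r-12) + W (r-13) + W (r-14) := by
    have := hW (r-11); simp only [sub_sub] at this; norm_num at this ⊢; exact this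
  have e13 : W (r-13) = W (r-14) + W (r-15) + W (r-16) := by
    have := hW (r-13); simp only [sub_sub] at this; norm_num at this ⊢; exact this
  have e14 : W (r-14) = W (r-15) + W (r-16) + W (r-17) := by
    have := hW (r-14); simp only [sub_sub] at this; norm_num at this ⊢; exact this
  linarith [hW r,e1,e2,e3,e4,e5,e6,e7,e8,e9,e10,e11,e13,e14]
end

section
/- For every integer r: K_{r-2} = 5 T_{r-1} - T_{r+1}. -/
private lemma trib_zero_s9 (f : ℤ → ℤ)
    (hf : ∀ r : ℤ, f r = f (r-1) + f (r-2) + f (r-3))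
    (h0 : f 0 = 0) (h1 : f 1 = 0) (h2 : f 2 = 0) :
    ∀ r : ℤ, f r = 0 := by
  have pos : ∀ n : ℕ, f n = 0 ∧ f (n+1) = 0 ∧ f (n+2) = 0 := by
    intro n
    induction n with
    | zero => simpa using ⟨h0, h1, h2⟩
    | succ k ih =>
      obtain ⟨a, b, c⟩ := ih
      refine ⟨by push_cast; linarith, ?_, ?_⟩
      · push_cast
        have e : (k:ℤ)+1+1 = k+2 := by ring
        rw [e]; exact c
      have := hf ((k:ℤ)+3)
      push_cast at *
      have e1 : (k:ℤ)+3-1 = k+2 := by ring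
      have e2 : (k:ℤ)+3-2 = k+1 := by ring
      have e3 : (k:ℤ)+3-3 = k := by ring
      rw [e1, e2, e3] at this
      have ek : (k:ℤ)+1+2 = k+3 := by ring
      rw [ek]
      linarith
  have neg : ∀ n : ℕ, f (-(n:ℤ)) = 0 ∧ f (-(n:ℤ)+1) = 0 ∧ f (-(n:ℤ)+2) = 0 := by
    intro n
    induction n with
    | zero => simpa using ⟨h0, h1, h2⟩
    | succ k ih =>
      obtain ⟨a, b, c⟩ := ih
      have hr := hf (-(k:ℤ)+2)
      have e1 : (-(k:ℤ)+2)-1 = -k+1 := by ring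
      have e2 : (-(k:ℤ)+2)-2 = -k := by ring
      have e3 : (-(k:ℤ)+2)-3 = -(k:ℤ)-1 := by ring
      rw [e1, e2, e3] at hr
      have hnew : f (-(k:ℤ)-1) = 0 := by linarith
      push_cast
      refine ⟨?_, ?_, ?_⟩
      · have : -(k:ℤ)-1 = -(k+1) := by ring
        rw [this] at hnew; exact hnew
      · have : -((k:ℤ)+1)+1 = -k := by ring
        rw [this]; exact a
      · have : -((k:ℤ)+1)+2 = -k+1 := by ring
        rw [this]; exact b
  intro r
  rcases le_or_gt 0 r with h | h
  · obtain ⟨n, rfl⟩ := Int.eq_ofNat_of_zero_le h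
    exact (pos n).1
  · obtain ⟨n, rfl⟩ : ∃ n : ℕ, r = -(n:ℤ) := ⟨r.natAbs, by omega⟩
    exact (neg n).1

theorem stmt_9 (T K : ℤ → ℤ)
    (hT : ∀ r : ℤ, T r = T (r-1) + T (r-2) + T (r-3))
    (hT0 : T 0 = 0) (hT1 : T 1 = 1) (hT2 : T 2 = 1)
    (hK : ∀ r : ℤ, K r = K (r-1) + K (r-2) + K (r-3))
    (hK0 : K 0 = 3) (hK1 : K 1 = 1) (hK2 : K 2 = 3)
    (r : ℤ) :
    K (r-2) = 5 * T (r-1) - T (r+1) := by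
  have hT3 : T 3 = 2 := by have := hT 3; norm_num at this; linarith
  have hT4 : T 4 = 4 := by have := hT 4; norm_num at this; linarith
  have hT5 : T 5 = 7 := by have := hT 5; norm_num at this; linarith
  set f : ℤ → ℤ := fun s => K s - 5 * T (s+1) + T (s+3) with hfdef
  have hf : ∀ s : ℤ, f s = f (s-1) + f (s-2) + f (s-3) := by
    intro s
    simp only [hfdef]
    have h1 := hK s
    have h2 := hT (s+1)
    have h3 := hT (s+3)
    have e1 : s+1-1 = s-1+1 := by ring
    have e2 : s+1-2 = s-2+1 := by ring
    have e3 : s+1-3 = s-3+1 := by ring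
    have e4 : s+3-1 = s-1+3 := by ring
    have e5 : s+3-2 = s-2+3 := by ring
    have e6 : s+3-3 = s-3+3 := by ring
    rw [e1, e2, e3] at h2
    rw [e4, e5, e6] at h3
    linarith
  have h0 : f 0 = 0 := by simp only [hfdef]; norm_num [hK0, hT1, hT3]
  have h1 : f 1 = 0 := by simp only [hfdef]; norm_num [hK1, hT2, hT4]
  have h2 : f 2 = 0 := by simp only [hfdef]; norm_num [hK2, hT3, hT5]
  have := trib_zero_s9 f hf h0 h1 h2 (r-2)
  simp only [hfdef] at this
  have e1 : r-2+1 = r-1 := by ring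
  have e2 : r-2+3 = r+1 := by ring
  rw [e1, e2] at this
  linarith
end

section
/- For all integers a, b, c, d, e: {K_{b-a-1}K_{a-b-1} + K_{b-a-1}K_{c-b-1}K_{a-c-1} + K_{c-a-1}K_{b-c-1}K_{a-b-1} + K_{c-a-1}K_{a-c-1} + K_{c-b-1}K_{b-c-1} - 1} W_{d+e} = {(1 - K_{c-b-1}K_{b-c-1})K_{e-a} + (K_{b-a-1} + K_{c-a-1}K_{b-c-1})K_{e-b} + (K_{c-a-1} + K_{b-a-1}K_{c-b-1})K_{e-c}} W_{d+a-1} + {(1 - K_{c-a-1}K_{a-c-1})K_{e-b} + (K_{a-b-1} + K_{c-b-1}K_{a-c-1})K_{e-a} + (K_{c-b-1} + K_{c-a-1}K_{a-b-1})K_{e-c}} W_{d+b-1} + {(1 - K_{b-a-1}K_{a-b-1})K_{e-c} + (K_{b-c-1} + K_{b-a-1}K_{a-c-1})K_{e-b} + (K_{a-c-1} + K_{b-c-1}K_{a-b-1})K_{e-a}} W_{d+c-1}. -/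
lemma tri_shift : ∀ n : ℤ, ∃ p q r : ℤ, ∀ S : ℤ → ℤ,
    (∀ m : ℤ, S m = S (m-1) + S (m-2) + S (m-3)) →
    ∀ m : ℤ, S (m + n) = p * S (m+2) + q * S (m+1) + r * S m := by
  intro n
  induction n using Int.induction_on with
  | zero =>
    exact ⟨0, 0, 1, fun S _ m => by simp⟩
  | succ i ih =>
    obtain ⟨p, q, r, h⟩ := ih
    refine ⟨p + q, p + r, p, fun S hS m => ?_⟩
    have h1 := h S hS (m+1)
    rw [show m+1+(i:ℤ) = m+(i+1) by ring, show m+1+2 = m+3 by ring,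
        show m+1+1 = m+2 by ring] at h1
    have h2 := hS (m+3)
    rw [show m+3-1 = m+2 by ring, show m+3-2 = m+1 by ring,
        show m+3-3 = m by ring] at h2
    rw [h1, h2]; ring
  | pred i ih =>
    obtain ⟨p, q, r, h⟩ := ih
    refine ⟨r, p - r, q - r, fun S hS m => ?_⟩
    have h1 := h S hS (m-1)
    rw [show m-1+(-(i:ℤ)) = m+(-i-1) by ring, show m-1+2 = m+1 by ring,
        show m-1+1 = m by ring] at h1
    have h2 := hS (m+2)
    rw [show m+2-1 = m+1 by ring, show m+2-2 = m by ring,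
        show m+2-3 = m-1 by ring] at h2
    rw [h1]
    have h3 : S (m-1) = S (m+2) - S (m+1) - S m := by linarith
    rw [h3]; ring

theorem stmt_10 (W K : ℤ → ℤ)
    (hW : ∀ r : ℤ, W r = W (r-1) + W (r-2) + W (r-3))
    (hK : ∀ r : ℤ, K r = K (r-1) + K (r-2) + K (r-3))
    (hK0 : K 0 = 3) (hK1 : K 1 = 1) (hK2 : K 2 = 3)
    (a b c d e : ℤ) :
    (K (b-a-1) * K (a-b-1) + K (b-a-1) * K (c-b-1) * K (a-c-1)
      + K (c-a-1) * K (b-c-1) * K (a-b-1) + K (c-a-1) * K (a-c-1)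
      + K (c-b-1) * K (b-c-1) - 1) * W (d+e) =
      ((1 - K (c-b-1) * K (b-c-1)) * K (e-a)
        + (K (b-a-1) + K (c-a-1) * K (b-c-1)) * K (e-b)
        + (K (c-a-1) + K (b-a-1) * K (c-b-1)) * K (e-c)) * W (d+a-1)
      + ((1 - K (c-a-1) * K (a-c-1)) * K (e-b)
        + (K (a-b-1) + K (c-b-1) * K (a-c-1)) * K (e-a)
        + (K (c-b-1) + K (c-a-1) * K (a-b-1)) * K (e-c)) * W (d+b-1)
      + ((1 - K (b-a-1) * K (a-b-1)) * K (e-c)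
        + (K (b-c-1) + K (b-a-1) * K (a-c-1)) * K (e-b)
        + (K (a-c-1) + K (b-c-1) * K (a-b-1)) * K (e-a)) * W (d+c-1) := by
  obtain ⟨pE, qE, rE, hE⟩ := tri_shift (e+1)
  obtain ⟨pA, qA, rA, hA⟩ := tri_shift a
  obtain ⟨pB, qB, rB, hB⟩ := tri_shift b
  obtain ⟨pC, qC, rC, hC⟩ := tri_shift c
  have hKm1 : K (-1) = -1 := by
    have h2 := hK 2
    norm_num at h2
    rw [hK0, hK1, hK2] at h2
    linarith
  have hWde := hE W hW (d-1)
  rw [show (d-1) + (e+1) = d+e by ring, show (d-1) + 2 = d+1 by ring,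
      show (d-1) + 1 = d by ring] at hWde
  have hKea := hE K hK (-a-1)
  rw [show (-a-1) + (e+1) = e-a by ring, show (-a-1) + 2 = 1-a by ring,
      show (-a-1) + 1 = -a by ring] at hKea
  have hKeb := hE K hK (-b-1)
  rw [show (-b-1) + (e+1) = e-b by ring, show (-b-1) + 2 = 1-b by ring,
      show (-b-1) + 1 = -b by ring] at hKeb
  have hKec := hE K hK (-c-1)
  rw [show (-c-1) + (e+1) = e-c by ring, show (-c-1) + 2 = 1-c by ring,
      show (-c-1) + 1 = -c by ring] at hKec
  have hWda := hA W hW (d-1)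
  rw [show (d-1) + (a) = d+a-1 by ring, show (d-1) + 2 = d+1 by ring,
      show (d-1) + 1 = d by ring] at hWda
  have hdA0 := hA K hK (-a-1)
  rw [show (-a-1) + (a) = -1 by ring, show (-a-1) + 2 = 1-a by ring,
      show (-a-1) + 1 = -a by ring] at hdA0
  have hKab := hA K hK (-b-1)
  rw [show (-b-1) + (a) = a-b-1 by ring, show (-b-1) + 2 = 1-b by ring,
      show (-b-1) + 1 = -b by ring] at hKab
  have hKac := hA K hK (-c-1)
  rw [show (-c-1) + (a) = a-c-1 by ring, show (-c-1) + 2 = 1-c by ring,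
      show (-c-1) + 1 = -c by ring] at hKac
  have hWdb := hB W hW (d-1)
  rw [show (d-1) + (b) = d+b-1 by ring, show (d-1) + 2 = d+1 by ring,
      show (d-1) + 1 = d by ring] at hWdb
  have hKba := hB K hK (-a-1)
  rw [show (-a-1) + (b) = b-a-1 by ring, show (-a-1) + 2 = 1-a by ring,
      show (-a-1) + 1 = -a by ring] at hKba
  have hdB0 := hB K hK (-b-1)
  rw [show (-b-1) + (b) = -1 by ring, show (-b-1) + 2 = 1-b by ring,
      show (-b-1) + 1 = -b by ring] at hdB0
  have hKbc := hB K hK (-c-1)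
  rw [show (-c-1) + (b) = b-c-1 by ring, show (-c-1) + 2 = 1-c by ring,
      show (-c-1) + 1 = -c by ring] at hKbc
  have hWdc := hC W hW (d-1)
  rw [show (d-1) + (c) = d+c-1 by ring, show (d-1) + 2 = d+1 by ring,
      show (d-1) + 1 = d by ring] at hWdc
  have hKca := hC K hK (-a-1)
  rw [show (-a-1) + (c) = c-a-1 by ring, show (-a-1) + 2 = 1-a by ring,
      show (-a-1) + 1 = -a by ring] at hKca
  have hKcb := hC K hK (-b-1)
  rw [show (-b-1) + (c) = c-b-1 by ring, show (-b-1) + 2 = 1-b by ring,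
      show (-b-1) + 1 = -b by ring] at hKcb
  have hdC0 := hC K hK (-c-1)
  rw [show (-c-1) + (c) = -1 by ring, show (-c-1) + 2 = 1-c by ring,
      show (-c-1) + 1 = -c by ring] at hdC0
  rw [hKm1] at hdA0 hdB0 hdC0
  have hdA := hdA0.symm
  have hdB := hdB0.symm
  have hdC := hdC0.symm
  rw [hWde, hKea, hKeb, hKec, hWda, hKab, hKac, hWdb, hKba, hKbc, hWdc, hKca, hKcb]
  linear_combination (-((pE * W (d+1) + qE * W d + rE * W (d-1)) * ((-1 : ℤ) * (-1 : ℤ) - (pB * K (1-c) + qB * K (-c) + rB * K (-c-1)) * (pC * K (1-b) + qC * K (-b) + rC * K (-b-1))) - (pE * K (1-b) + qE * K (-b) + rE * K (-b-1)) * ((pB * W (d+1) + qB * W d + rB * W (d-1)) * (-1 : ℤ) - (pB * K (1-c) + qB * K (-c) + rB * K (-c-1)) * (pC * W (d+1) + qC * W d + rC * W (d-1))) + (pE * K (1-c) + qE * K (-c) + rE * K (-c-1)) * ((pB * W (d+1) + qB * W d + rB * W (d-1)) * (pC * K (1-b) + qC * K (-b) + rC * K (-b-1)) - (-1 : ℤ)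 * (pC * W (d+1) + qC * W d + rC * W (d-1))))) * hdA + (-((pE * W (d+1) + qE * W d + rE * W (d-1)) * ((pA * K (1-a) + qA * K (-a) + rA * K (-a-1)) * (-1 : ℤ) - (pA * K (1-c) + qA * K (-c) + rA * K (-c-1)) * (pC * K (1-a) + qC * K (-a) + rC * K (-a-1))) - (pE * K (1-a) + qE * K (-a) + rE * K (-a-1)) * ((pA * W (d+1) + qA * W d + rA * W (d-1)) * (-1 : ℤ) - (pA * K (1-c) + qA * K (-c) + rA * K (-c-1)) * (pC * W (d+1) + qC * W d + rC * W (d-1))) + (pE * K (1-c) + qE * K (-c) + rE * K (-c-1)) * ((pA * W (d+1) + qA * W d + rA * W (d-1)) * (pC * K (1-a) + qC * K (-a) + rC * K (-a-1)) - (pA * K (1-a) + qA * K (-a) + rA * K (-a-1)) * (pC * W (d+1) + qC * W d + rC * W (d-1))))) * hdB + (-((pE * W (d+1) + qE * W d + rE * W (d-1)) * ((pA * K (1-a) + qA * K (-a) + rA * K (-a-1)) * (pB * K (1-b) + qB * K (-b) + rB * K (-b-1)) - (pA * K (1-b) + qA * K (-b) + rA * K (-b-1)) * (pB * K (1-a)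 + qB * K (-a) + rB * K (-a-1))) - (pE * K (1-a) + qE * K (-a) + rE * K (-a-1)) * ((pA * W (d+1) + qA * W d + rA * W (d-1)) * (pB * K (1-b) + qB * K (-b) + rB * K (-b-1)) - (pA * K (1-b) + qA * K (-b) + rA * K (-b-1)) * (pB * W (d+1) + qB * W d + rB * W (d-1))) + (pE * K (1-b) + qE * K (-b) + rE * K (-b-1)) * ((pA * W (d+1) + qA * W d + rA * W (d-1)) * (pB * K (1-a) + qB * K (-a) + rB * K (-a-1)) - (pA * K (1-a) + qA * K (-a) + rA * K (-a-1)) * (pB * W (d+1) + qB * W d + rB * W (d-1))))) * hdC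
end

section
/- For all integers r and s: 44 W_{r+s} = (9 K_{s+3} - K_{s+5} + 2 K_{s+1}) W_{r-6} + (9 K_{s+1} + K_{s+5} + 2 K_{s+3}) W_{r-4} + (K_{s+3} + 6 K_{s+5} - K_{s+1}) W_{r-2}. -/
theorem stmt_11 (W K : ℤ → ℤ)
    (hW : ∀ r : ℤ, W r = W (r-1) + W (r-2) + W (r-3))
    (hK : ∀ r : ℤ, K r = K (r-1) + K (r-2) + K (r-3))
    (hK0 : K 0 = 3) (hK1 : K 1 = 1) (hK2 : K 2 = 3)
    (r s : ℤ) :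
    44 * W (r+s) = (9 * K (s+3) - K (s+5) + 2 * K (s+1)) * W (r-6)
      + (9 * K (s+1) + K (s+5) + 2 * K (s+3)) * W (r-4)
      + (K (s+3) + 6 * K (s+5) - K (s+1)) * W (r-2) := by
  have h3W : ∀ a : ℤ, W (a + 3) = W (a + 2) + W (a + 1) + W a := by
    intro a
    have h := hW (a + 3)
    simp only [show a+3-1 = a+2 from by ring, show a+3-2 = a+1 from by ring,
      show a+3-3 = a from by ring] at h
    exact h
  have h3K : ∀ a : ℤ, K (a + 3) = K (a + 2) + K (a + 1) + K a := by
    intro a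
    have h := hK (a + 3)
    simp only [show a+3-1 = a+2 from by ring, show a+3-2 = a+1 from by ring,
      show a+3-3 = a from by ring] at h
    exact h
  have hK3 : K 3 = 7 := by have h := h3K 0; norm_num [hK0, hK1, hK2] at h; linarith
  have hK4 : K 4 = 11 := by have h := h3K 1; norm_num [hK1, hK2, hK3] at h; linarith
  have hK5 : K 5 = 21 := by have h := h3K 2; norm_num [hK2, hK3, hK4] at h; linarith
  have hK6 : K 6 = 39 := by have h := h3K 3; norm_num [hK3, hK4, hK5] at h; linarith
  have hK7 : K 7 = 71 := by have h := h3K 4; norm_num [hK4, hK5, hK6] at h; linarith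
  have main : ∀ s : ℤ,
      (∀ r : ℤ, 44 * W (r+s) = (9 * K (s+3) - K (s+5) + 2 * K (s+1)) * W (r-6)
        + (9 * K (s+1) + K (s+5) + 2 * K (s+3)) * W (r-4)
        + (K (s+3) + 6 * K (s+5) - K (s+1)) * W (r-2))
      ∧ (∀ r : ℤ, 44 * W (r+(s+1)) = (9 * K (s+1+3) - K (s+1+5) + 2 * K (s+1+1)) * W (r-6)
        + (9 * K (s+1+1) + K (s+1+5) + 2 * K (s+1+3)) * W (r-4)
        + (K (s+1+3) + 6 * K (s+1+5) - K (s+1+1)) * W (r-2))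
      ∧ (∀ r : ℤ, 44 * W (r+(s+2)) = (9 * K (s+2+3) - K (s+2+5) + 2 * K (s+2+1)) * W (r-6)
        + (9 * K (s+2+1) + K (s+2+5) + 2 * K (s+2+3)) * W (r-4)
        + (K (s+2+3) + 6 * K (s+2+5) - K (s+2+1)) * W (r-2)) := by
    intro s
    induction s using Int.induction_on with
    | zero =>
      refine ⟨fun r => ?_, fun r => ?_, fun r => ?_⟩
      · norm_num [hK1, hK3, hK5]
        have e0 := hW r; have e1 := hW (r-1); have e2 := hW (r-2); have e3 := hW (r-3)
        ring_nf at e0 e1 e2 e3 ⊢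
        linear_combination 44*(e0 + e1 - e2 + e3)
      · norm_num [hK2, hK4, hK6]
        have em1 := hW (r+1)
        have e0 := hW r; have e1 := hW (r-1); have e2 := hW (r-2); have e3 := hW (r-3)
        ring_nf at em1 e0 e1 e2 e3 ⊢
        linear_combination 44*em1 + 44*e0 + 88*e1 - 66*e2 + 66*e3
      · norm_num [hK3, hK5, hK7]
        have em2 := hW (r+2); have em1 := hW (r+1)
        have e0 := hW r; have e1 := hW (r-1); have e2 := hW (r-2); have e3 := hW (r-3)
        ring_nf at em2 em1 e0 e1 e2 e3 ⊢
        linear_combination 44*(em2 + em1 + 2*e0 + 4*e1 - 3*e2 + 3*e3)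
    | succ i ih =>
      refine ⟨ih.2.1, ih.2.2, fun r => ?_⟩
      have e1 := ih.1 r; have e2 := ih.2.1 r; have e3 := ih.2.2 r
      have w := h3W (r + i)
      have kA := h3K ((i:ℤ)+1); have kB := h3K ((i:ℤ)+3); have kC := h3K ((i:ℤ)+5)
      ring_nf at e1 e2 e3 w kA kB kC ⊢
      linear_combination 44*w + e1 + e2 + e3 - (9*kB - kC + 2*kA)*W (-6+r)
        - (9*kA + kC + 2*kB)*W (-4+r) - (kB + 6*kC - kA)*W (-2+r)
    | pred i ih =>
      refine ⟨fun r => ?_, fun r => ?_, fun r => ?_⟩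
      · have e1 := ih.1 r; have e2 := ih.2.1 r; have e3 := ih.2.2 r
        have w := h3W (r + (-(i:ℤ)-1))
        have kA := h3K (-(i:ℤ)-1+1); have kB := h3K (-(i:ℤ)-1+3); have kC := h3K (-(i:ℤ)-1+5)
        ring_nf at e1 e2 e3 w kA kB kC ⊢
        linear_combination e3 - e2 - e1 - 44*w + (9*kB - kC + 2*kA)*W (-6+r)
          + (9*kA + kC + 2*kB)*W (-4+r) + (kB + 6*kC - kA)*W (-2+r)
      · have h := ih.1 r; ring_nf at h ⊢; linear_combination h
      · have h := ih.2.1 r; ring_nf at h ⊢; linear_combination h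
  exact (main s).1 r
end

section
/- For all integers r and s: 22 W_{r+s} = (5 K_{s-2} + K_{s-1} + 2 K_s) W_{r-1} + (K_{s-2} - 2 K_{s-1} + 7 K_s) W_r + (2 K_{s-2} + 7 K_{s-1} + 3 K_s) W_{r+1}. -/
theorem stmt_12 (W K : ℤ → ℤ)
    (hW : ∀ r : ℤ, W r = W (r-1) + W (r-2) + W (r-3))
    (hK : ∀ r : ℤ, K r = K (r-1) + K (r-2) + K (r-3))
    (hK0 : K 0 = 3) (hK1 : K 1 = 1) (hK2 : K 2 = 3)
    (r s : ℤ) :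
    22 * W (r+s) = (5 * K (s-2) + K (s-1) + 2 * K s) * W (r-1)
      + (K (s-2) - 2 * K (s-1) + 7 * K s) * W r
      + (2 * K (s-2) + 7 * K (s-1) + 3 * K s) * W (r+1) := by
  have hKm1 : K (-1) = -1 := by
    have h2 := hK 2; norm_num at h2; linarith
  have hKm2 : K (-2) = -1 := by
    have h1 := hK 1; norm_num at h1; linarith
  have key : ∀ s : ℤ, ∀ r : ℤ,
      22 * W (r+s) = (5 * K (s-2) + K (s-1) + 2 * K s) * W (r-1)
      + (K (s-2) - 2 * K (s-1) + 7 * K s) * W r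
      + (2 * K (s-2) + 7 * K (s-1) + 3 * K s) * W (r+1) := by
    intro s
    induction s using Int.induction_on with
    | zero =>
      intro r
      norm_num [hKm1, hKm2, hK0]
    | succ i ih =>
      intro r
      have h := ih (r+1)
      have hw := hW (r+2)
      have hk := hK (↑i+1)
      ring_nf at h hw hk ⊢
      rw [hk]
      rw [hw] at h
      linear_combination h
    | pred i ih =>
      intro r
      have h := ih (r-1)
      have hw := hW (r+1)
      have hk := hK (-↑i)
      ring_nf at h hw hk ⊢
      rw [hk] at h
      rw [hw]
      linear_combination h
  exact key s r
end

section
/- For every integer r: W_r^2 - 2 W_{r-1}^2 - 3 W_{r-2}^2 - 6 W_{r-3}^2 + W_{r-4}^2 + W_{r-6}^2 = 0. -/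
theorem stmt_15 (W : ℤ → ℤ)
    (hW : ∀ r : ℤ, W r = W (r-1) + W (r-2) + W (r-3))
    (r : ℤ) :
    (W r)^2 - 2 * (W (r-1))^2 - 3 * (W (r-2))^2 - 6 * (W (r-3))^2
      + (W (r-4))^2 + (W (r-6))^2 = 0 := by
  have h0 := hW r
  have h1 := hW (r-1)
  have h2 := hW (r-2)
  have h3 := hW (r-3)
  rw [show r-1-1 = r-2 from by ring, show r-1-2 = r-3 from by ring,
      show r-1-3 = r-4 from by ring] at h1
  rw [show r-2-1 = r-3 from by ring, show r-2-2 = r-4 from by ring,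
      show r-2-3 = r-5 from by ring] at h2
  rw [show r-3-1 = r-4 from by ring, show r-3-2 = r-5 from by ring,
      show r-3-3 = r-6 from by ring] at h3
  rw [h0, h1, h2, h3]
  ring
end

section
/- For every integer r: 4 K_r^2 = 5 T_{r+5}^2 - 20 T_{r+4}^2 + 4 T_{r+3}^2 + 90 T_{r+1}^2 - 20 T_r^2 + 5 T_{r-3}^2. -/
theorem stmt_16 (T K : ℤ → ℤ)
    (hT : ∀ r : ℤ, T r = T (r-1) + T (r-2) + T (r-3))
    (hT0 : T 0 = 0) (hT1 : T 1 = 1) (hT2 : T 2 = 1)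
    (hK : ∀ r : ℤ, K r = K (r-1) + K (r-2) + K (r-3))
    (hK0 : K 0 = 3) (hK1 : K 1 = 1) (hK2 : K 2 = 3)
    (r : ℤ) :
    4 * (K r)^2 = 5 * (T (r+5))^2 - 20 * (T (r+4))^2 + 4 * (T (r+3))^2
      + 90 * (T (r+1))^2 - 20 * (T r)^2 + 5 * (T (r-3))^2 := by
  have hT' : ∀ s : ℤ, T (s+3) = T (s+2) + T (s+1) + T s := by
    intro s
    have := hT (s+3)
    rw [show s+3-1 = s+2 by ring, show s+3-2 = s+1 by ring,
      show s+3-3 = s by ring] at this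
    exact this
  have hK' : ∀ s : ℤ, K (s+3) = K (s+2) + K (s+1) + K s := by
    intro s
    have := hK (s+3)
    rw [show s+3-1 = s+2 by ring, show s+3-2 = s+1 by ring,
      show s+3-3 = s by ring] at this
    exact this
  have key : ∀ n : ℤ, K n = 4 * T (n+1) - T n - T (n+2)
      ∧ K (n+1) = 4 * T (n+2) - T (n+1) - T (n+3)
      ∧ K (n+2) = 4 * T (n+3) - T (n+2) - T (n+4) := by
    intro n
    induction n using Int.induction_on with
    | zero =>
      have t3 := hT' 0
      have t4 := hT' 1
      norm_num at t3 t4 ⊢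
      refine ⟨?_, ?_, ?_⟩ <;> linarith
    | succ k ih =>
      obtain ⟨h1, h2, h3⟩ := ih
      have hk3 := hK' (k : ℤ)
      have ht3 := hT' ((k : ℤ)+2)
      have ht1 := hT' (k : ℤ)
      have ht2 := hT' ((k : ℤ)+1)
      refine ⟨?_, ?_, ?_⟩ <;> ring_nf at h1 h2 h3 hk3 ht1 ht2 ht3 ⊢ <;> linarith
    | pred k ih =>
      obtain ⟨h1, h2, h3⟩ := ih
      have hk3 := hK' (-(k : ℤ)-1)
      have ht3 := hT' (-(k : ℤ)-1)
      have ht1 := hT' (-(k : ℤ))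
      have ht2 := hT' (1-(k : ℤ))
      refine ⟨?_, ?_, ?_⟩ <;> ring_nf at h1 h2 h3 hk3 ht1 ht2 ht3 ⊢ <;> linarith
  obtain ⟨hkr, -, -⟩ := key r
  have t3 := hT' r
  have t4 := hT' (r+1)
  have t5 := hT' (r+2)
  have tm3 := hT' (r-3)
  have tm2 := hT' (r-2)
  have tm1 := hT' (r-1)
  ring_nf at t3 t4 t5 tm3 tm2 tm1 hkr ⊢
  have em1 : T (r-1) = T (r+2) - T (r+1) - T r := by ring_nf; linarith
  have em2 : T (r-2) = 2 * T (r+1) - T (r+2) := by ring_nf; ring_nf at em1; linarith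
  have em3 : T (r-3) = 2 * T r - T (r+1) := by ring_nf; ring_nf at em1 em2; linarith
  ring_nf at em3
  rw [hkr, t5, t4, t3, em3]
  ring
end

section
/- For all integers r and s: 16 W_{r+s}^2 = -(T_s + T_{s+4})(-T_{s+4} + 2 T_{s-1} + 7 T_s) W_r^2 + 4 T_{s-1} T_s W_{r-7}^2 + 2 T_{s-1}(-T_{s+4} - 9 T_s + 2 T_{s-1}) W_{r-4}^2 - 2 T_s (T_{s+4} - 7 T_s + 2 T_{s-1}) W_{r-3}^2 + 8 T_{s-1}(T_s + T_{s+4}) W_{r-1}^2 + 2 T_s (T_s + T_{s+4}) W_{r+1}^2. -/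
theorem stmt_17 (W T : ℤ → ℤ)
    (hW : ∀ r : ℤ, W r = W (r-1) + W (r-2) + W (r-3))
    (hT : ∀ r : ℤ, T r = T (r-1) + T (r-2) + T (r-3))
    (hT0 : T 0 = 0) (hT1 : T 1 = 1) (hT2 : T 2 = 1)
    (r s : ℤ) :
    16 * (W (r+s))^2 =
      -((T s + T (s+4)) * (-T (s+4) + 2 * T (s-1) + 7 * T s)) * (W r)^2
      + 4 * T (s-1) * T s * (W (r-7))^2
      + 2 * T (s-1) * (-T (s+4) - 9 * T s + 2 * T (s-1)) * (W (r-4))^2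
      - 2 * T s * (T (s+4) - 7 * T s + 2 * T (s-1)) * (W (r-3))^2
      + 8 * T (s-1) * (T s + T (s+4)) * (W (r-1))^2
      + 2 * T s * (T s + T (s+4)) * (W (r+1))^2 := by
  -- normalized recurrences
  have hW3 : ∀ t : ℤ, W (t+3) = W (t+2) + W (t+1) + W t := by
    intro t
    have h := hW (t+3)
    simp only [show t+3-1 = t+2 from by ring, show t+3-2 = t+1 from by ring,
      show t+3-3 = t from by ring] at h
    exact h
  have hT' : ∀ t : ℤ, T (t+1) = T t + T (t-1) + T (t-2) := by
    intro t
    have h := hT (t+1)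
    simp only [show t+1-1 = t from by ring, show t+1-2 = t-1 from by ring,
      show t+1-3 = t-2 from by ring] at h
    exact h
  have hTm1 : T (-1) = 0 := by
    have h := hT 2
    simp only [show (2:ℤ)-1 = 1 from by norm_num, show (2:ℤ)-2 = 0 from by norm_num,
      show (2:ℤ)-3 = -1 from by norm_num] at h
    omega
  have hTm2 : T (-2) = 1 := by
    have h := hT 1
    simp only [show (1:ℤ)-1 = 0 from by norm_num, show (1:ℤ)-2 = -1 from by norm_num,
      show (1:ℤ)-3 = -2 from by norm_num] at h
    omega
  -- addition formula
  have addW : ∀ s r : ℤ,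
      W (r+s) = T (s-2) * W r + (T s - T (s-1)) * W (r+1) + T (s-1) * W (r+2) := by
    intro s
    induction s using Int.induction_on with
    | zero =>
      intro r
      simp only [show (0:ℤ)-2 = -2 from by norm_num, show (0:ℤ)-1 = -1 from by norm_num,
        hTm2, hTm1, hT0, add_zero]
      ring
    | succ n ih =>
      intro r
      have h1 := ih (r+1)
      rw [show r+1+1 = r+2 from by ring, show r+1+2 = r+3 from by ring] at h1
      have h2 := hW3 r
      have h3 := hT' (n:ℤ)
      rw [show r + ((n:ℤ)+1) = (r+1) + (n:ℤ) from by ring,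
        show ((n:ℤ)+1)-2 = (n:ℤ)-1 from by ring,
        show ((n:ℤ)+1)-1 = (n:ℤ) from by ring]
      linear_combination h1 + T ((n:ℤ)-1) * h2 - W (r+1) * h3
    | pred n ih =>
      intro r
      have h1 := ih (r-1)
      rw [show r-1+1 = r from by ring, show r-1+2 = r+1 from by ring] at h1
      have h2 := hW3 (r-1)
      rw [show r-1+3 = r+2 from by ring, show r-1+2 = r+1 from by ring,
        show r-1+1 = r from by ring] at h2
      have h3 := hT' (-(n:ℤ)-1)
      rw [show -(n:ℤ)-1+1 = -(n:ℤ) from by ring, show -(n:ℤ)-1-1 = -(n:ℤ)-2 from by ring,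
        show -(n:ℤ)-1-2 = -(n:ℤ)-3 from by ring] at h3
      rw [show r + (-(n:ℤ) - 1) = (r-1) + (-(n:ℤ)) from by ring,
        show -(n:ℤ)-1-2 = -(n:ℤ)-3 from by ring,
        show -(n:ℤ)-1-1 = -(n:ℤ)-2 from by ring]
      linear_combination h1 - T (-(n:ℤ)-2) * h2 + W r * h3
  -- T (s+4) in terms of T (s-2), T (s-1), T s
  have t1 := hT' s
  have t2 := hT' (s+1)
  rw [show s+1+1 = s+2 from by ring, show s+1-1 = s from by ring,
    show s+1-2 = s-1 from by ring] at t2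
  have t3 := hT' (s+2)
  rw [show s+2+1 = s+3 from by ring, show s+2-1 = s+1 from by ring,
    show s+2-2 = s from by ring] at t3
  have t4 := hT' (s+3)
  rw [show s+3+1 = s+4 from by ring, show s+3-1 = s+2 from by ring,
    show s+3-2 = s+1 from by ring] at t4
  have hTs4 : T (s+4) = 4 * T (s-2) + 6 * T (s-1) + 7 * T s := by
    linear_combination t4 + t3 + 2*t2 + 4*t1
  -- backward expressions for W (r-k)
  have e1 : W (r-1) = W (r+2) - W (r+1) - W r := by
    have h := hW (r+2)
    rw [show r+2-1 = r+1 from by ring, show r+2-2 = r from by ring,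
      show r+2-3 = r-1 from by ring] at h
    linarith
  have e2 : W (r-2) = W (r+1) - W r - W (r-1) := by
    have h := hW (r+1)
    rw [show r+1-1 = r from by ring, show r+1-2 = r-1 from by ring,
      show r+1-3 = r-2 from by ring] at h
    linarith
  have e3 : W (r-3) = W r - W (r-1) - W (r-2) := by
    have h := hW r
    linarith
  have e4 : W (r-4) = W (r-1) - W (r-2) - W (r-3) := by
    have h := hW (r-1)
    rw [show r-1-1 = r-2 from by ring, show r-1-2 = r-3 from by ring,
      show r-1-3 = r-4 from by ring] at h
    linarith
  have e5 : W (r-5) = W (r-2) - W (r-3) - W (r-4) := by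
    have h := hW (r-2)
    rw [show r-2-1 = r-3 from by ring, show r-2-2 = r-4 from by ring,
      show r-2-3 = r-5 from by ring] at h
    linarith
  have e6 : W (r-6) = W (r-3) - W (r-4) - W (r-5) := by
    have h := hW (r-3)
    rw [show r-3-1 = r-4 from by ring, show r-3-2 = r-5 from by ring,
      show r-3-3 = r-6 from by ring] at h
    linarith
  have e7 : W (r-7) = W (r-4) - W (r-5) - W (r-6) := by
    have h := hW (r-4)
    rw [show r-4-1 = r-5 from by ring, show r-4-2 = r-6 from by ring,
      show r-4-3 = r-7 from by ring] at h
    linarith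
  rw [addW s r, hTs4, e7, e6, e5, e4, e3, e2, e1]
  ring
end

section
/- For every integer r: W_r^3 - 4 W_{r-1}^3 - 9 W_{r-2}^3 - 34 W_{r-3}^3 + 24 W_{r-4}^3 - 2 W_{r-5}^3 + 40 W_{r-6}^3 - 14 W_{r-7}^3 - W_{r-8}^3 - 2 W_{r-9}^3 + W_{r-10}^3 = 0. -/
theorem stmt_18 (W : ℤ → ℤ)
    (hW : ∀ r : ℤ, W r = W (r-1) + W (r-2) + W (r-3))
    (r : ℤ) :
    (W r)^3 - 4 * (W (r-1))^3 - 9 * (W (r-2))^3 - 34 * (W (r-3))^3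
      + 24 * (W (r-4))^3 - 2 * (W (r-5))^3 + 40 * (W (r-6))^3
      - 14 * (W (r-7))^3 - (W (r-8))^3 - 2 * (W (r-9))^3 + (W (r-10))^3 = 0 := by
  have key : ∀ s : ℤ, W s = W (s-1) + W (s-2) + W (s-3) := hW
  have b7 : W (r-7) = W (r-8) + W (r-9) + W (r-10) := by
    rw [key (r-7)]; ring_nf
  have b6 : W (r-6) = W (r-7) + W (r-8) + W (r-9) := by
    rw [key (r-6)]; ring_nf
  have b5 : W (r-5) = W (r-6) + W (r-7) + W (r-8) := by
    rw [key (r-5)]; ring_nf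
  have b4 : W (r-4) = W (r-5) + W (r-6) + W (r-7) := by
    rw [key (r-4)]; ring_nf
  have b3 : W (r-3) = W (r-4) + W (r-5) + W (r-6) := by
    rw [key (r-3)]; ring_nf
  have b2 : W (r-2) = W (r-3) + W (r-4) + W (r-5) := by
    rw [key (r-2)]; ring_nf
  have b1 : W (r-1) = W (r-2) + W (r-3) + W (r-4) := by
    rw [key (r-1)]; ring_nf
  have b0 : W r = W (r-1) + W (r-2) + W (r-3) := key r
  rw [b0, b1, b2, b3, b4, b5, b6, b7]
  ring
end

section
/- For every integer r: 11844 W_r^3 + 3 W_{r-19}^3 + W_{r-17}^3 + 458556 W_{r-6}^3 + 135548 W_{r-4}^3 - 442179 W_{r-3}^3 - 120204 W_{r-2}^3 - 43569 W_{r-1}^3 = 0. -/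
set_option maxHeartbeats 2000000 in

theorem stmt_19 (W : ℤ → ℤ)
    (hW : ∀ r : ℤ, W r = W (r-1) + W (r-2) + W (r-3))
    (r : ℤ) :
    11844 * (W r)^3 + 3 * (W (r-19))^3 + (W (r-17))^3 + 458556 * (W (r-6))^3
      + 135548 * (W (r-4))^3 - 442179 * (W (r-3))^3 - 120204 * (W (r-2))^3
      - 43569 * (W (r-1))^3 = 0 := by
  have e0 : W (r) = W (r-1) + W (r-2) + W (r-3) := by
    have h := hW (r)
    simpa using h
  have e1 : W (r-1) = W (r-2) + W (r-3) + W (r-4) := by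
    have h := hW (r-1)
    rw [show (r-1)-1 = r-2 from by ring, show (r-1)-2 = r-3 from by ring, show (r-1)-3 = r-4 from by ring] at h; exact h
  have e2 : W (r-2) = W (r-3) + W (r-4) + W (r-5) := by
    have h := hW (r-2)
    rw [show (r-2)-1 = r-3 from by ring, show (r-2)-2 = r-4 from by ring, show (r-2)-3 = r-5 from by ring] at h; exact h
  have e3 : W (r-3) = W (r-4) + W (r-5) + W (r-6) := by
    have h := hW (r-3)
    rw [show (r-3)-1 = r-4 from by ring, show (r-3)-2 = r-5 from by ring, show (r-3)-3 = r-6 from by ring] at h; exact h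
  have e4 : W (r-4) = W (r-5) + W (r-6) + W (r-7) := by
    have h := hW (r-4)
    rw [show (r-4)-1 = r-5 from by ring, show (r-4)-2 = r-6 from by ring, show (r-4)-3 = r-7 from by ring] at h; exact h
  have e5 : W (r-5) = W (r-6) + W (r-7) + W (r-8) := by
    have h := hW (r-5)
    rw [show (r-5)-1 = r-6 from by ring, show (r-5)-2 = r-7 from by ring, show (r-5)-3 = r-8 from by ring] at h; exact h
  have e6 : W (r-6) = W (r-7) + W (r-8) + W (r-9) := by
    have h := hW (r-6)
    rw [show (r-6)-1 = r-7 from by ring, show (r-6)-2 = r-8 from by ring, show (r-6)-3 = r-9 from by ring] at h; exact h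
  have e7 : W (r-7) = W (r-8) + W (r-9) + W (r-10) := by
    have h := hW (r-7)
    rw [show (r-7)-1 = r-8 from by ring, show (r-7)-2 = r-9 from by ring, show (r-7)-3 = r-10 from by ring] at h; exact h
  have e8 : W (r-8) = W (r-9) + W (r-10) + W (r-11) := by
    have h := hW (r-8)
    rw [show (r-8)-1 = r-9 from by ring, show (r-8)-2 = r-10 from by ring, show (r-8)-3 = r-11 from by ring] at h; exact h
  have e9 : W (r-9) = W (r-10) + W (r-11) + W (r-12) := by
    have h := hW (r-9)
    rw [show (r-9)-1 = r-10 from by ring, show (r-9)-2 = r-11 from by ring, show (r-9)-3 = r-12 from by ring] at h; exact h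
  have e10 : W (r-10) = W (r-11) + W (r-12) + W (r-13) := by
    have h := hW (r-10)
    rw [show (r-10)-1 = r-11 from by ring, show (r-10)-2 = r-12 from by ring, show (r-10)-3 = r-13 from by ring] at h; exact h
  have e11 : W (r-11) = W (r-12) + W (r-13) + W (r-14) := by
    have h := hW (r-11)
    rw [show (r-11)-1 = r-12 from by ring, show (r-11)-2 = r-13 from by ring, show (r-11)-3 = r-14 from by ring] at h; exact h
  have e12 : W (r-12) = W (r-13) + W (r-14) + W (r-15) := by
    have h := hW (r-12)
    rw [show (r-12)-1 = r-13 from by ring, show (r-12)-2 = r-14 from by ring, show (r-12)-3 = r-15 from by ring] at h; exact h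
  have e13 : W (r-13) = W (r-14) + W (r-15) + W (r-16) := by
    have h := hW (r-13)
    rw [show (r-13)-1 = r-14 from by ring, show (r-13)-2 = r-15 from by ring, show (r-13)-3 = r-16 from by ring] at h; exact h
  have e14 : W (r-14) = W (r-15) + W (r-16) + W (r-17) := by
    have h := hW (r-14)
    rw [show (r-14)-1 = r-15 from by ring, show (r-14)-2 = r-16 from by ring, show (r-14)-3 = r-17 from by ring] at h; exact h
  have e15 : W (r-15) = W (r-16) + W (r-17) + W (r-18) := by
    have h := hW (r-15)
    rw [show (r-15)-1 = r-16 from by ring, show (r-15)-2 = r-17 from by ring, show (r-15)-3 = r-18 from by ring] at h; exact h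
  have e16 : W (r-16) = W (r-17) + W (r-18) + W (r-19) := by
    have h := hW (r-16)
    rw [show (r-16)-1 = r-17 from by ring, show (r-16)-2 = r-18 from by ring, show (r-16)-3 = r-19 from by ring] at h; exact h
  rw [e0, e1, e2, e3, e4, e5, e6, e7, e8, e9, e10, e11, e12, e13, e14, e15, e16]
  ring
end
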